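/- arXiv:2603.19065 — 3 statements merged into one kernel-verified Lean document; each statement's English description precedes it below -/
import Mathlib

section
/- Let Q, P ∈ O_K[x] with Q̄ ≠ 0 or P̄ not a square in k[x] (i.e. the reduced equation y² + Q̄y = P̄ defines a reduced curve). If 2·ord₀(Q̄) ≤ ord₀(P̄) or ord₀(P̄) is odd, then for every H' ∈ O_K[x] one has δ₀(Q − 2H', P + QH' − H'²) ≤ δ₀(Q, P); that is, δ₀(Q, P) is maximal among all equations obtained by substitutions y = z + H'(x). -/
open Polynomial

/-- The normalized valuation on a DVR with uniformizer `π`: `ν(a)` is the supremum of the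
naturals `l` with `π^l ∣ a` (so `ν(0) = ⊤`). -/
noncomputable def nuVal {O_K : Type*} [CommRing O_K] (π : O_K) (a : O_K) : ℕ∞ :=
  ⨆ l : {l : ℕ // π ^ l ∣ a}, ((l : ℕ) : ℕ∞)

/-- `μ₀(G) = min_j (ν(c_j) + j)` for `G = Σ_j c_j x^j` (with `μ₀(0) = ⊤`). -/
noncomputable def mu0 {O_K : Type*} [CommRing O_K] (π : O_K) (G : Polynomial O_K) : ℕ∞ :=
  ⨅ j : ℕ, (nuVal π (G.coeff j) + (j : ℕ∞))

/-- `λ₀(Q, P) = min {2μ₀(Q), μ₀(P)}`. -/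
noncomputable def lam0 {O_K : Type*} [CommRing O_K] (π : O_K) (Q P : Polynomial O_K) : ℕ∞ :=
  min (2 * mu0 π Q) (mu0 π P)

open Classical in
/-- The order of vanishing at `x = 0` of a polynomial over the residue field, with
`ord₀(0) = ⊤`. -/
noncomputable def ordZero {k : Type*} [CommRing k] (g : Polynomial k) : ℕ∞ :=
  if g = 0 then ⊤ else (g.rootMultiplicity 0 : ℕ∞)

/-- `δ₀(Q, P) = min {2·ord₀(Q̄), ord₀(P̄)}`, where `Ḡ` is the reduction modulo the maximal
ideal. -/
noncomputable def delta0 {O_K : Type*} [CommRing O_K] [IsLocalRing O_K]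
    (Q P : Polynomial O_K) : ℕ∞ :=
  min (2 * ordZero (Q.map (IsLocalRing.residue O_K)))
    (ordZero (P.map (IsLocalRing.residue O_K)))

/-- `H = Σ_j e_j x^j` is an adapted shift for `P = Σ_j a_j x^j` if for every `j`:
`e_j = 0` whenever `a_{2j} = 0` or `ν(a_{2j})` is odd, and `e_j² ∈ a_{2j}(1 + πO_K)`
whenever `a_{2j} ≠ 0` and `ν(a_{2j})` is even. -/
def IsAdaptedShift {O_K : Type*} [CommRing O_K] (π : O_K) (P H : Polynomial O_K) : Prop :=
  ∀ j : ℕ,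
    ((P.coeff (2 * j) = 0 ∨ ¬ ∃ m : ℕ, nuVal π (P.coeff (2 * j)) = ((2 * m : ℕ) : ℕ∞)) →
      H.coeff j = 0) ∧
    ((P.coeff (2 * j) ≠ 0 ∧ ∃ m : ℕ, nuVal π (P.coeff (2 * j)) = ((2 * m : ℕ) : ℕ∞)) →
      ∃ u : O_K, (H.coeff j) ^ 2 = P.coeff (2 * j) * (1 + π * u))

lemma pow_dvd_iff_le_ordZero {F : Type*} [CommRing F] (g : Polynomial F) (l : ℕ) :
    X ^ l ∣ g ↔ (l : ℕ∞) ≤ ordZero g := by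
  unfold ordZero
  split_ifs with h
  · simp [h]
  · rw [Nat.cast_le, Polynomial.le_rootMultiplicity_iff h]
    simp

lemma lt_ordZero_iff {F : Type*} [CommRing F] (g : Polynomial F) (n : ℕ) :
    (n : ℕ∞) < ordZero g ↔ X ^ (n + 1) ∣ g := by
  rw [pow_dvd_iff_le_ordZero, Nat.cast_add, Nat.cast_one,
    ENat.add_one_le_iff (by exact_mod_cast WithTop.coe_ne_top)]

lemma ordZero_eq_iff {F : Type*} [CommRing F] (g : Polynomial F) (n : ℕ) :
    ordZero g = (n : ℕ∞) ↔ X ^ n ∣ g ∧ ¬ X ^ (n + 1) ∣ g := by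
  rw [pow_dvd_iff_le_ordZero, ← lt_ordZero_iff]
  constructor
  · intro hEq; rw [hEq]; exact ⟨le_rfl, lt_irrefl _⟩
  · rintro ⟨h1, h2⟩; exact le_antisymm (not_lt.mp h2) h1

lemma ordZero_mul {F : Type*} [CommRing F] [IsDomain F] {a b : Polynomial F}
    (ha : a ≠ 0) (hb : b ≠ 0) : ordZero (a * b) = ordZero a + ordZero b := by
  unfold ordZero
  rw [if_neg (mul_ne_zero ha hb), if_neg ha, if_neg hb,
    Polynomial.rootMultiplicity_mul (mul_ne_zero ha hb)]
  push_cast; ring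

lemma ordZero_add_left {F : Type*} [CommRing F] {a b : Polynomial F} {r s : ℕ}
    (ha : ordZero a = (r : ℕ∞)) (hb : ordZero b = (s : ℕ∞)) (hrs : r < s) :
    ordZero (a + b) = (r : ℕ∞) := by
  rw [ordZero_eq_iff] at ha hb ⊢
  refine ⟨dvd_add ha.1 (dvd_trans (pow_dvd_pow X hrs.le) hb.1), fun hd => ha.2 ?_⟩
  have : a = (a + b) - b := by ring
  rw [this]
  exact dvd_sub hd (dvd_trans (pow_dvd_pow X hrs) hb.1)

/-- suppose `Q̄ ≠ 0` or `P̄` is not a square in `k[x]`. If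
`2·ord₀(Q̄) ≤ ord₀(P̄)` or `ord₀(P̄)` is odd, then `δ₀(Q, P)` is maximal among all equations
obtained by substitutions `y = z + H'(x)`. -/
theorem statement8 (O_K : Type*) [CommRing O_K] [IsDomain O_K] [IsDiscreteValuationRing O_K]
    (π : O_K) (hπ : Irreducible π)
    [CharP (IsLocalRing.ResidueField O_K) 2] [PerfectField (IsLocalRing.ResidueField O_K)]
    (Q P : Polynomial O_K)
    (hred : Q.map (IsLocalRing.residue O_K) ≠ 0 ∨
      ¬ ∃ W : Polynomial (IsLocalRing.ResidueField O_K),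
        P.map (IsLocalRing.residue O_K) = W ^ 2)
    (hcond : 2 * ordZero (Q.map (IsLocalRing.residue O_K)) ≤
        ordZero (P.map (IsLocalRing.residue O_K)) ∨
      ∃ m : ℕ, ordZero (P.map (IsLocalRing.residue O_K)) = ((2 * m + 1 : ℕ) : ℕ∞)) :
    ∀ H' : Polynomial O_K,
      delta0 (Q - 2 * H') (P + Q * H' - H' ^ 2) ≤ delta0 Q P := by
  intro H'
  unfold delta0
  revert H'
  intro H'
  set φ := IsLocalRing.residue O_K with hφ
  set Qm := Q.map φ with hQm
  set Pm := P.map φ with hPm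
  set h := H'.map φ with hhm
  have h2 : (2 : IsLocalRing.ResidueField O_K) = 0 := by
    have := CharP.cast_eq_zero (IsLocalRing.ResidueField O_K) 2
    simpa using this
  have hQ' : (Q - 2 * H').map φ = Qm := by
    rw [Polynomial.map_sub, Polynomial.map_mul, ← hQm]
    have h22 : (2 : Polynomial O_K) = C (2 : O_K) := (map_ofNat (C : O_K →+* Polynomial O_K) 2).symm
    have hφ2 : φ (2 : O_K) = 0 := by rw [map_ofNat φ 2, h2]
    rw [h22, Polynomial.map_C, hφ2, Polynomial.C_0, zero_mul, sub_zero]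
  have hS' : (P + Q * H' - H' ^ 2).map φ = Pm + Qm * h - h ^ 2 := by
    simp [Polynomial.map_sub, Polynomial.map_add, Polynomial.map_mul, Polynomial.map_pow]
    rfl
  rw [hQ', hS']
  set Sm := Pm + Qm * h - h ^ 2 with hSm
  rcases hcond with hA | ⟨m, hm⟩
  · rw [min_eq_left hA]
    exact min_le_left _ _
  · refine le_min (min_le_left _ _) ?_
    rw [hm]
    by_contra hc
    push_neg at hc
    set n := 2 * m + 1 with hn
    have hQlt : (n : ℕ∞) < 2 * ordZero Qm := lt_of_lt_of_le hc (min_le_left _ _)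
    have hSlt : (n : ℕ∞) < ordZero Sm := lt_of_lt_of_le hc (min_le_right _ _)
    have hSd : X ^ (n + 1) ∣ Sm := (lt_ordZero_iff _ _).mp hSlt
    have hPdvd : X ^ n ∣ Pm := (pow_dvd_iff_le_ordZero _ _).mpr (le_of_eq hm.symm)
    have hPnd : ¬ X ^ (n + 1) ∣ Pm := by
      rw [← lt_ordZero_iff, hm]; exact lt_irrefl _
    set T := h * (Qm - h) with hT
    have hST : Sm = Pm + T := by rw [hSm, hT]; ring
    have hTd : X ^ n ∣ T := by
      have : T = Sm - Pm := by rw [hST]; ring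
      rw [this]
      exact dvd_sub (dvd_trans (pow_dvd_pow X n.le_succ) hSd) hPdvd
    have hTnd : ¬ X ^ (n + 1) ∣ T := by
      intro hd
      apply hPnd
      have : Pm = Sm - T := by rw [hST]; ring
      rw [this]
      exact dvd_sub hSd hd
    have hT0 : T ≠ 0 := by
      intro h0; rw [h0] at hTnd; exact hTnd (dvd_zero _)
    have hh0 : h ≠ 0 := fun h0 => hT0 (by rw [hT, h0, zero_mul])
    have hQh0 : Qm - h ≠ 0 := fun h0 => hT0 (by rw [hT, h0, mul_zero])
    have hOrdT : ordZero T = (n : ℕ∞) := (ordZero_eq_iff _ _).mpr ⟨hTd, hTnd⟩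
    set r := h.rootMultiplicity 0 with hr
    set s := (Qm - h).rootMultiplicity 0 with hs
    have hOrdh : ordZero h = (r : ℕ∞) := by unfold ordZero; rw [if_neg hh0]
    have hOrds : ordZero (Qm - h) = (s : ℕ∞) := by unfold ordZero; rw [if_neg hQh0]
    have hrs : r + s = n := by
      have := ordZero_mul hh0 hQh0
      rw [hOrdT, hOrdh, hOrds] at this
      exact_mod_cast this.symm
    have hQcast : ∀ t : ℕ, ordZero Qm = (t : ℕ∞) → n < 2 * t := by
      intro t ht
      rw [ht] at hQlt
      have h2t : (2 : ℕ∞) * (t : ℕ∞) = ((2 * t : ℕ) : ℕ∞) := by push_cast; ring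
      rw [h2t] at hQlt
      exact_mod_cast hQlt
    rcases lt_trichotomy r s with hlt | heq | hgt
    · have hQr : ordZero Qm = (r : ℕ∞) := by
        have : Qm = h + (Qm - h) := by ring
        rw [this]
        exact ordZero_add_left hOrdh hOrds hlt
      have := hQcast r hQr
      omega
    · omega
    · have hQs : ordZero Qm = (s : ℕ∞) := by
        have : Qm = (Qm - h) + h := by ring
        rw [this]
        exact ordZero_add_left hOrds hOrdh hgt
      have := hQcast s hQs
      omega
end

section
/- Let Q, P ∈ O_K[x] with Q̄ ≠ 0 or P̄ not a square in k[x]. Let H be an adapted shift for P, and set R := Q − 2H and S := P + QH − H². Then δ₀(R, S) ≥ δ₀(Q, P). Moreover, if there exists H' ∈ O_K[x] with δ₀(Q − 2H', P + QH' − H'²) > δ₀(Q, P), then the inequality is strict: δ₀(R, S) > δ₀(Q, P). -/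
open Polynomial

lemma coeff_eq_zero_of_lt_ordZero {k : Type*} [CommRing k] {g : k[X]} {c : ℕ}
    (h : (c : ℕ∞) < ordZero g) : g.coeff c = 0 := by
  unfold ordZero at h
  split_ifs at h with hg
  · simp [hg]
  · rw [Nat.cast_lt] at h
    have hd : X ^ g.rootMultiplicity 0 ∣ g := by
      simpa using g.pow_rootMultiplicity_dvd 0
    exact (X_pow_dvd_iff.mp hd) c h

lemma le_ordZero {k : Type*} [CommRing k] {g : k[X]} {n : ℕ}
    (h : ∀ c < n, g.coeff c = 0) : (n : ℕ∞) ≤ ordZero g := by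
  unfold ordZero
  split_ifs with hg
  · exact le_top
  · rw [Nat.cast_le, le_rootMultiplicity_iff hg]
    simpa using X_pow_dvd_iff.mpr h

lemma coeff_ne_zero_of_ordZero_eq {k : Type*} [CommRing k] {g : k[X]} {b : ℕ}
    (h : ordZero g = (b : ℕ∞)) : g.coeff b ≠ 0 := by
  intro h0
  have : ((b + 1 : ℕ) : ℕ∞) ≤ ordZero g := by
    apply le_ordZero
    intro c hc
    rcases Nat.lt_succ_iff_lt_or_eq.mp hc with hc | rfl
    · exact coeff_eq_zero_of_lt_ordZero (by rw [h]; exact_mod_cast hc)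
    · exact h0
  rw [h, Nat.cast_le] at this
  omega

lemma enat_le_of_forall'' {x y : ℕ∞} (h : ∀ n : ℕ, (n : ℕ∞) ≤ x → (n : ℕ∞) ≤ y) : x ≤ y := by
  cases y using ENat.recTopCoe with
  | top => exact le_top
  | coe m =>
    by_contra hc
    push_neg at hc
    have h1 : ((m + 1 : ℕ) : ℕ∞) ≤ x := by
      exact_mod_cast Order.add_one_le_of_lt hc
    have := h (m + 1) h1
    rw [Nat.cast_le] at this
    omega

lemma coeff_sq'' {k : Type*} [Field k] [CharP k 2] (g : k[X]) (n : ℕ) :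
    (g ^ 2).coeff n = if 2 ∣ n then (g.coeff (n / 2)) ^ 2 else 0 := by
  haveI : Fact (Nat.Prime 2) := ⟨Nat.prime_two⟩
  rw [← map_frobenius_expand, coeff_map, coeff_expand (by norm_num : 0 < 2)]
  split_ifs with h
  · rw [frobenius_def]
  · rw [map_zero]

lemma nuVal_eq_zero_of_not_dvd {O_K : Type*} [CommRing O_K] {π a : O_K}
    (h : ¬ π ∣ a) : nuVal π a = 0 := by
  unfold nuVal
  refine le_antisymm (iSup_le ?_) zero_le
  rintro ⟨l, hl⟩
  match l with
  | 0 => simp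
  | Nat.succ l =>
    exact absurd ((dvd_pow_self π (Nat.succ_ne_zero l)).trans hl) h

/-- suppose `Q̄ ≠ 0` or `P̄` is not a square in `k[x]`. If `H` is an adapted
shift for `P`, and `R = Q − 2H`, `S = P + QH − H²`, then `δ₀(R, S) ≥ δ₀(Q, P)`, with strict
inequality whenever some substitution `y = z + H'(x)` increases `δ₀`. -/
theorem statement9 (O_K : Type*) [CommRing O_K] [IsDomain O_K] [IsDiscreteValuationRing O_K]
    (π : O_K) (hπ : Irreducible π)
    [CharP (IsLocalRing.ResidueField O_K) 2] [PerfectField (IsLocalRing.ResidueField O_K)]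
    (Q P H : Polynomial O_K)
    (hred : Q.map (IsLocalRing.residue O_K) ≠ 0 ∨
      ¬ ∃ W : Polynomial (IsLocalRing.ResidueField O_K),
        P.map (IsLocalRing.residue O_K) = W ^ 2)
    (hH : IsAdaptedShift π P H) :
    delta0 (Q - 2 * H) (P + Q * H - H ^ 2) ≥ delta0 Q P ∧
      ((∃ H' : Polynomial O_K,
          delta0 (Q - 2 * H') (P + Q * H' - H' ^ 2) > delta0 Q P) →
        delta0 (Q - 2 * H) (P + Q * H - H ^ 2) > delta0 Q P) := by
  classical
  set k := IsLocalRing.ResidueField O_K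
  set φ := IsLocalRing.residue O_K with hφdef
  -- basic facts about the residue map
  have h2k : (2 : k) = 0 := by
    have := CharP.cast_eq_zero k 2
    exact_mod_cast this
  have hφπ : φ π = 0 := by
    rw [IsLocalRing.residue_eq_zero_iff]
    exact hπ.not_isUnit
  have h2X : (2 : k[X]) = 0 := by
    rw [← map_ofNat (C : k →+* k[X]) 2, h2k, map_zero]
  have hmapR : ∀ G : O_K[X], (Q - 2 * G).map φ = Q.map φ := by
    intro G
    rw [Polynomial.map_sub, Polynomial.map_mul, Polynomial.map_ofNat, h2X, zero_mul, sub_zero]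
  have hmapS : ∀ G : O_K[X], (P + Q * G - G ^ 2).map φ
      = P.map φ + (Q.map φ) * (G.map φ) - (G.map φ) ^ 2 := by
    intro G
    rw [Polynomial.map_sub, Polynomial.map_add, Polynomial.map_mul, Polynomial.map_pow]
  set q := Q.map φ with hq
  set p := P.map φ with hp
  set h := H.map φ with hh
  set oq := ordZero q with hoq
  set op := ordZero p with hop
  -- (F1) : the key property of the adapted shift modulo π
  have hF1 : ∀ j : ℕ, (h.coeff j) ^ 2 = p.coeff (2 * j) := by
    intro j
    rw [hh, hp, coeff_map, coeff_map, ← map_pow]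
    by_cases hz : P.coeff (2 * j) = 0 ∨
        ¬ ∃ m : ℕ, nuVal π (P.coeff (2 * j)) = ((2 * m : ℕ) : ℕ∞)
    · rw [(hH j).1 hz]
      rw [ne_comm] at *
      have : φ (P.coeff (2 * j)) = 0 := by
        rcases hz with hz | hz
        · rw [hz, map_zero]
        · by_contra hne
          have hu : IsUnit (P.coeff (2 * j)) :=
            (IsLocalRing.residue_ne_zero_iff_isUnit _).mp hne
          have hnd : ¬ π ∣ P.coeff (2 * j) := by
            rintro ⟨c, hc⟩
            exact hπ.not_isUnit (isUnit_of_mul_isUnit_left (hc ▸ hu))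
          exact hz ⟨0, by rw [nuVal_eq_zero_of_not_dvd hnd]; simp⟩
      rw [this, map_pow, map_zero]
      simp
    · push_neg at hz
      obtain ⟨u, hu⟩ := (hH j).2 ⟨hz.1, hz.2⟩
      rw [hu, map_mul, map_add, map_one, map_mul, hφπ, zero_mul, add_zero, mul_one]
  -- the main coefficient computation (Part 1 core)
  have hcore : ∀ c : ℕ, (c : ℕ∞) < 2 * oq → (c : ℕ∞) < op →
      (p + q * h - h ^ 2).coeff c = 0 := by
    intro c hc1 hc2
    have hqh : (q * h).coeff c = 0 := by
      rw [Polynomial.coeff_mul]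
      apply Finset.sum_eq_zero
      rintro ⟨i, j⟩ hij
      rw [Finset.HasAntidiagonal.mem_antidiagonal] at hij
      by_cases hqi : q.coeff i = 0
      · rw [hqi, zero_mul]
      · have hoqi : oq ≤ (i : ℕ∞) := by
          by_contra hlt
          push_neg at hlt
          exact hqi (coeff_eq_zero_of_lt_ordZero hlt)
        have h2i : (c : ℕ∞) < ((2 * i : ℕ) : ℕ∞) := by
          refine lt_of_lt_of_le hc1 ?_
          push_cast
          exact mul_le_mul_right hoqi 2
        rw [Nat.cast_lt] at h2i
        have hjc : 2 * j < c := by omega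
        have hzz : (h.coeff j) ^ 2 = 0 := by
          rw [hF1 j]
          exact coeff_eq_zero_of_lt_ordZero (lt_trans (by exact_mod_cast hjc) hc2)
        rw [pow_eq_zero_iff (two_ne_zero : (2:ℕ) ≠ 0)] at hzz
        rw [hzz, mul_zero]
    have hpz : p.coeff c = 0 := coeff_eq_zero_of_lt_ordZero hc2
    have hh2 : (h ^ 2).coeff c = 0 := by
      rw [coeff_sq'']
      split_ifs with hd
      · obtain ⟨j, rfl⟩ := hd
        rw [Nat.mul_div_cancel_left j (by norm_num), hF1 j]
        exact hpz
      · rfl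
    simp [Polynomial.coeff_add, Polynomial.coeff_sub, hpz, hqh, hh2]
  constructor
  · -- Part 1
    unfold delta0
    rw [hmapR, hmapS]
    refine le_min (min_le_left _ _) ?_
    apply enat_le_of_forall''
    intro n hn
    apply le_ordZero
    intro c hc
    have hcn : (c : ℕ∞) < min (2 * oq) op :=
      lt_of_lt_of_le (by exact_mod_cast hc) hn
    exact hcore c (lt_of_lt_of_le hcn (min_le_left _ _)) (lt_of_lt_of_le hcn (min_le_right _ _))
  · -- Part 2
    rintro ⟨H', hH'⟩
    unfold delta0 at hH' ⊢
    rw [hmapR, hmapS] at hH' ⊢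
    set h' := H'.map φ with hh'
    set s' := p + q * h' - h' ^ 2 with hs'def
    -- the minimum is attained at `op`, and `op` is finite
    have hopq : op < 2 * oq := by
      by_contra hle
      push_neg at hle
      rw [min_eq_left hle] at hH'
      exact absurd (min_le_left (2 * oq) (ordZero s')) (not_le.mpr hH')
    rw [min_eq_right hopq.le] at hH'
    have hs'gt : op < ordZero s' := lt_of_lt_of_le hH' (min_le_right _ _)
    have hoptop : op ≠ ⊤ := fun htop => not_top_lt (htop ▸ hopq)
    obtain ⟨b, hb⟩ : ∃ b : ℕ, op = (b : ℕ∞) := by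
      cases hc : op using ENat.recTopCoe with
      | top => exact absurd hc hoptop
      | coe m => exact ⟨m, rfl⟩
    have hpb : p.coeff b ≠ 0 := coeff_ne_zero_of_ordZero_eq (hop ▸ hb)
    -- auxiliary: if q.coeff i ≠ 0 then b < 2 * i
    have hqgt : ∀ i : ℕ, q.coeff i ≠ 0 → b < 2 * i := by
      intro i hqi
      have hoqi : oq ≤ (i : ℕ∞) := by
        by_contra hlt
        push_neg at hlt
        exact hqi (coeff_eq_zero_of_lt_ordZero hlt)
      have : ((b : ℕ∞)) < ((2 * i : ℕ) : ℕ∞) := by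
        refine lt_of_lt_of_le (hb ▸ hopq) ?_
        push_cast
        exact mul_le_mul_right hoqi 2
      exact_mod_cast this
    -- Claim A: low coefficients of h' vanish
    have hA : ∀ j : ℕ, 2 * j < b → h'.coeff j = 0 := by
      intro j
      induction j using Nat.strong_induction_on with
      | _ j IH =>
        intro hjb
        have hs'c : s'.coeff (2 * j) = 0 := by
          apply coeff_eq_zero_of_lt_ordZero
          refine lt_trans ?_ hs'gt
          rw [hb, Nat.cast_lt]
          exact hjb
        have hpc : p.coeff (2 * j) = 0 := by
          apply coeff_eq_zero_of_lt_ordZero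
          rw [← hop, hb, Nat.cast_lt]
          exact hjb
        have hqh' : (q * h').coeff (2 * j) = 0 := by
          rw [Polynomial.coeff_mul]
          apply Finset.sum_eq_zero
          rintro ⟨i, i'⟩ hii
          rw [Finset.HasAntidiagonal.mem_antidiagonal] at hii
          by_cases hqi : q.coeff i = 0
          · rw [hqi, zero_mul]
          · have hbi := hqgt i hqi
            have hi'j : i' < j := by omega
            rw [IH i' hi'j (by omega), mul_zero]
        have hsq : (h' ^ 2).coeff (2 * j) = (h'.coeff j) ^ 2 := by
          rw [coeff_sq'']
          rw [if_pos ⟨j, rfl⟩, Nat.mul_div_cancel_left j (by norm_num)]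
        have : (h'.coeff j) ^ 2 = 0 := by
          have := hs'c
          rw [hs'def, Polynomial.coeff_sub, Polynomial.coeff_add, hpc, hqh', hsq] at this
          simpa using this
        rwa [pow_eq_zero_iff (two_ne_zero : (2:ℕ) ≠ 0)] at this
    -- b is even
    have hbeven : 2 ∣ b := by
      by_contra hodd
      have hs'b : s'.coeff b = 0 := by
        apply coeff_eq_zero_of_lt_ordZero
        exact hb ▸ hs'gt
      have hqh'b : (q * h').coeff b = 0 := by
        rw [Polynomial.coeff_mul]
        apply Finset.sum_eq_zero
        rintro ⟨i, i'⟩ hii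
        rw [Finset.HasAntidiagonal.mem_antidiagonal] at hii
        by_cases hqi : q.coeff i = 0
        · rw [hqi, zero_mul]
        · have hbi := hqgt i hqi
          rw [hA i' (by omega), mul_zero]
      have hsqb : (h' ^ 2).coeff b = 0 := by
        rw [coeff_sq'', if_neg hodd]
      rw [hs'def, Polynomial.coeff_sub, Polynomial.coeff_add, hqh'b, hsqb] at hs'b
      simp at hs'b
      exact hpb hs'b
    -- conclude: the adapted shift strictly increases delta0
    rw [min_eq_right hopq.le]
    refine lt_min hopq ?_
    have hqhb : (q * h).coeff b = 0 := by
      rw [Polynomial.coeff_mul]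
      apply Finset.sum_eq_zero
      rintro ⟨i, i'⟩ hii
      rw [Finset.HasAntidiagonal.mem_antidiagonal] at hii
      by_cases hqi : q.coeff i = 0
      · rw [hqi, zero_mul]
      · have hbi := hqgt i hqi
        have : (h.coeff i') ^ 2 = 0 := by
          rw [hF1 i']
          apply coeff_eq_zero_of_lt_ordZero
          rw [← hop, hb, Nat.cast_lt]
          omega
        rw [pow_eq_zero_iff (two_ne_zero : (2:ℕ) ≠ 0)] at this
        rw [this, mul_zero]
    have hsqb : (h ^ 2).coeff b = p.coeff b := by
      obtain ⟨j₀, rfl⟩ := hbeven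
      rw [coeff_sq'', if_pos ⟨j₀, rfl⟩, Nat.mul_div_cancel_left j₀ (by norm_num), hF1 j₀]
    have hsb : (p + q * h - h ^ 2).coeff b = 0 := by
      rw [Polynomial.coeff_sub, Polynomial.coeff_add, hqhb, hsqb]
      ring
    rw [hb]
    have : ((b + 1 : ℕ) : ℕ∞) ≤ ordZero (p + q * h - h ^ 2) := by
      apply le_ordZero
      intro c hc
      rcases Nat.lt_succ_iff_lt_or_eq.mp hc with hc | rfl
      · refine hcore c (lt_trans ?_ hopq) ?_
        · rw [hb, Nat.cast_lt]; exact hc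
        · rw [hb, Nat.cast_lt]; exact hc
      · exact hsb
    refine lt_of_lt_of_le ?_ this
    exact_mod_cast Nat.lt_succ_self b
end

section
/- Let Q, P = Σ_j a_j x^j ∈ O_K[x]. If 2μ₀(Q) ≤ μ₀(P), or there exists an odd index j with ν(a_j) + j = μ₀(P), then for every H' ∈ O_K[x] one has λ₀(Q − 2H', P + QH' − H'²) ≤ λ₀(Q, P); that is, λ₀(Q, P) is maximal among all equations obtained by substitutions y = z + H'(x). -/
open Polynomial

theorem enat_eq_top_of_forall {x : ℕ∞} (h : ∀ n : ℕ, (n : ℕ∞) ≤ x) : x = ⊤ := by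
  by_contra hx
  obtain ⟨m, rfl⟩ := WithTop.ne_top_iff_exists.1 hx |>.imp fun m h => h.symm
  have := Nat.cast_le (α := ℕ∞) |>.1 (h (m + 1))
  omega

section nu
set_option linter.unusedSectionVars false
variable {O_K : Type*} [CommRing O_K] [IsDomain O_K] [IsDiscreteValuationRing O_K]
  {π : O_K} (hπ : Irreducible π)

theorem nuVal_eq_emultiplicity (a : O_K) : nuVal π a = emultiplicity π a := by
  apply le_antisymm
  · exact iSup_le fun l => pow_dvd_iff_le_emultiplicity.1 l.2
  · rcases eq_top_or_lt_top (emultiplicity π a) with h | h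
    · rw [h, top_le_iff]
      apply enat_eq_top_of_forall
      exact fun n => le_iSup (fun l : {l : ℕ // π ^ l ∣ a} => ((l : ℕ) : ℕ∞))
        ⟨n, pow_dvd_iff_le_emultiplicity.2 (h ▸ le_top)⟩
    · obtain ⟨n, hn⟩ := WithTop.ne_top_iff_exists.1 h.ne
      rw [← hn]
      exact le_iSup (fun l : {l : ℕ // π ^ l ∣ a} => ((l : ℕ) : ℕ∞))
        ⟨n, pow_dvd_iff_le_emultiplicity.2 hn.le⟩

include hπ

theorem pow_dvd_iff_le_nuVal {a : O_K} {n : ℕ} : π ^ n ∣ a ↔ (n : ℕ∞) ≤ nuVal π a := by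
  rw [nuVal_eq_emultiplicity]; exact pow_dvd_iff_le_emultiplicity

theorem nuVal_eq_top_iff {a : O_K} : nuVal π a = ⊤ ↔ a = 0 := by
  rw [nuVal_eq_emultiplicity, emultiplicity_eq_top]
  constructor
  · intro h
    by_contra ha
    exact h (FiniteMultiplicity.of_not_isUnit hπ.not_isUnit ha)
  · rintro rfl
    rw [FiniteMultiplicity.not_iff_forall]
    exact fun n => dvd_zero _

theorem nuVal_mul (a b : O_K) : nuVal π (a * b) = nuVal π a + nuVal π b := by
  simp only [nuVal_eq_emultiplicity]; exact emultiplicity_mul hπ.prime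

theorem nuVal_neg (a : O_K) : nuVal π (-a) = nuVal π a := by
  simp only [nuVal_eq_emultiplicity]; exact emultiplicity_neg π a

theorem nuVal_add_of_gt {a b : O_K} (h : nuVal π b < nuVal π a) :
    nuVal π (a + b) = nuVal π b := by
  simp only [nuVal_eq_emultiplicity] at *; exact emultiplicity_add_of_gt h

/-- key shifted sum bound -/
theorem nuVal_sum_add {ι : Type*} {s : Finset ι} {f : ι → O_K} {c : ℕ∞} {d : ℕ}
    (h : ∀ i ∈ s, c ≤ nuVal π (f i) + d) : c ≤ nuVal π (∑ i ∈ s, f i) + d := by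
  by_cases hc : c ≤ (d : ℕ∞)
  · exact hc.trans (le_add_self)
  push_neg at hc
  obtain ⟨m, rfl⟩ : ∃ m, c = m + (d : ℕ∞) := ⟨c - d, (tsub_add_cancel_of_le hc.le).symm⟩
  have hiff : ∀ x : ℕ∞, m + (d:ℕ∞) ≤ x + d ↔ m ≤ x := fun x =>
    WithTop.add_le_add_iff_right (ENat.coe_ne_top d)
  rw [hiff]
  have hm' : ∀ i ∈ s, m ≤ nuVal π (f i) := fun i hi => (hiff _).1 (h i hi)
  rcases eq_top_or_lt_top m with rfl | hmt
  · have : ∀ i ∈ s, f i = 0 := fun i hi => (nuVal_eq_top_iff hπ).1 (top_le_iff.1 (hm' i hi))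
    rw [Finset.sum_eq_zero this, (nuVal_eq_top_iff hπ).2 rfl]
  · obtain ⟨n, rfl⟩ := WithTop.ne_top_iff_exists.1 hmt.ne |>.imp fun n h => h.symm
    exact (pow_dvd_iff_le_nuVal hπ).1 <| Finset.dvd_sum fun i hi =>
      (pow_dvd_iff_le_nuVal hπ).2 (hm' i hi)

theorem nuVal_add_add {x y : O_K} {c : ℕ∞} {d : ℕ}
    (hx : c ≤ nuVal π x + d) (hy : c ≤ nuVal π y + d) : c ≤ nuVal π (x + y) + d := by
  have := nuVal_sum_add hπ (s := ({0, 1} : Finset ℕ)) (f := fun i => if i = 0 then x else y)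
    (c := c) (d := d) (by intro i hi; fin_cases hi <;> simpa)
  simpa using this

end nu

section mu
set_option linter.unusedSectionVars false
variable {O_K : Type*} [CommRing O_K] [IsDomain O_K] [IsDiscreteValuationRing O_K]
  {π : O_K} (hπ : Irreducible π)

theorem mu0_le_coeff (G : Polynomial O_K) (j : ℕ) :
    mu0 π G ≤ nuVal π (G.coeff j) + (j : ℕ∞) := iInf_le _ j

theorem le_mu0 {G : Polynomial O_K} {c : ℕ∞}
    (h : ∀ j, c ≤ nuVal π (G.coeff j) + (j : ℕ∞)) : c ≤ mu0 π G := le_iInf h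

theorem mu0_attained {G : Polynomial O_K} (h : mu0 π G ≠ ⊤) :
    ∃ j, nuVal π (G.coeff j) + (j : ℕ∞) = mu0 π G := by
  by_contra hc
  push_neg at hc
  have : ∀ j : ℕ, mu0 π G + 1 ≤ nuVal π (G.coeff j) + (j : ℕ∞) := by
    intro j
    have h1 := mu0_le_coeff (π := π) G j
    exact ENat.add_one_le_iff h |>.2 (lt_of_le_of_ne h1 (Ne.symm (hc j)))
  have := le_mu0 this
  have h2 : mu0 π G < mu0 π G + 1 := ENat.lt_add_one_iff h |>.2 le_rfl
  exact absurd this (not_le.2 h2)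

include hπ in
/-- product coefficient bound -/
theorem mu0_mul_coeff (G H : Polynomial O_K) (n : ℕ) :
    mu0 π G + mu0 π H ≤ nuVal π ((G * H).coeff n) + (n : ℕ∞) := by
  rw [coeff_mul]
  apply nuVal_sum_add hπ
  rintro ⟨i, l⟩ hmem
  rw [Finset.HasAntidiagonal.mem_antidiagonal] at hmem
  have hmem' : i + l = n := hmem
  have : ((n : ℕ) : ℕ∞) = (i : ℕ∞) + (l : ℕ∞) := by exact_mod_cast hmem'.symm
  rw [nuVal_mul hπ, this, ← add_assoc]
  calc mu0 π G + mu0 π H ≤ (nuVal π (G.coeff i) + i) + (nuVal π (H.coeff l) + l) :=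
        add_le_add (mu0_le_coeff G i) (mu0_le_coeff H l)
    _ = nuVal π (G.coeff i) + nuVal π (H.coeff l) + i + l := by ring

end mu

theorem coeff_sq_odd {O_K : Type*} [CommRing O_K] (H : Polynomial O_K) (m : ℕ) :
    (H * H).coeff (2 * m + 1) =
      2 * ∑ k ∈ Finset.range (m + 1), H.coeff k * H.coeff (2 * m + 1 - k) := by
  rw [coeff_mul, Finset.Nat.sum_antidiagonal_eq_sum_range_succ_mk]
  set f : ℕ → O_K := fun k => H.coeff k * H.coeff (2 * m + 1 - k) with hf
  have hsplit : ∑ k ∈ Finset.range (2 * m + 1 + 1), f k =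
      (∑ k ∈ Finset.range (m + 1), f k) + ∑ k ∈ Finset.Ico (m + 1) (2 * m + 2), f k := by
    simp only [Finset.range_eq_Ico]
    rw [← Finset.sum_Ico_consecutive _ (Nat.zero_le (m+1)) (by omega : m + 1 ≤ 2 * m + 2)]

  have hsecond : ∑ k ∈ Finset.Ico (m + 1) (2 * m + 2), f k =
      ∑ k ∈ Finset.range (m + 1), f k := by
    rw [Finset.sum_Ico_eq_sum_range]
    have hn : 2 * m + 2 - (m + 1) = m + 1 := by omega
    rw [hn]
    rw [← Finset.sum_range_reflect (fun i => f (m + 1 + i)) (m + 1)]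
    apply Finset.sum_congr rfl
    intro i hi
    rw [Finset.mem_range] at hi
    have h1 : m + 1 + (m + 1 - 1 - i) = 2 * m + 1 - i := by omega
    have h2 : 2 * m + 1 - (2 * m + 1 - i) = i := by omega
    simp only [hf, h1, h2]
    ring
  rw [hsplit, hsecond, two_mul]

section sub
set_option linter.unusedSectionVars false
variable {O_K : Type*} [CommRing O_K] [IsDomain O_K] [IsDiscreteValuationRing O_K]
  {π : O_K} (hπ : Irreducible π)

theorem enat_two_mul_lt {x y : ℕ∞} (h : x < y) : 2 * x < 2 * y := by
  have hx : x ≠ ⊤ := h.ne_top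
  rw [two_mul, two_mul]
  have hxx : x + x ≠ ⊤ := WithTop.add_ne_top.2 ⟨hx, hx⟩
  rw [← ENat.add_one_le_iff hxx]
  calc x + x + 1 ≤ (x + 1) + (x + 1) := by
        rw [add_assoc, add_assoc]
        exact add_le_add_right (by simp [add_comm x 1, le_add_self]) x
    _ ≤ y + y := add_le_add (ENat.add_one_le_iff hx |>.2 h) (ENat.add_one_le_iff hx |>.2 h)

include hπ

theorem nuVal_two (h2 : π ∣ (2 : O_K)) : (1 : ℕ∞) ≤ nuVal π (2 : O_K) :=
  (pow_dvd_iff_le_nuVal hπ (n := 1)).1 (by simpa using h2)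

/-- Sublemma R : if `a ≤ h` and `a ≠ ⊤` then `μ₀(Q - 2H') ≤ μ₀(Q)`. -/
theorem subR (h2 : π ∣ (2 : O_K)) (Q H' : Polynomial O_K)
    (ha : mu0 π Q ≠ ⊤) (hah : mu0 π Q ≤ mu0 π H') :
    mu0 π (Q - 2 * H') ≤ mu0 π Q := by
  obtain ⟨j, hj⟩ := mu0_attained (π := π) ha
  have hco : (Q - 2 * H').coeff j = -(2 * H'.coeff j) + Q.coeff j := by
    simp [coeff_sub]; ring
  have hbig : mu0 π Q < nuVal π (-(2 * H'.coeff j)) + (j : ℕ∞) := by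
    rw [nuVal_neg hπ, nuVal_mul hπ]
    calc mu0 π Q < mu0 π Q + 1 := by
          rw [ENat.lt_add_one_iff ha]
      _ = 1 + mu0 π Q := by rw [add_comm]
      _ ≤ 1 + (nuVal π (H'.coeff j) + (j : ℕ∞)) :=
          add_le_add_right (hah.trans (mu0_le_coeff H' j)) 1
      _ ≤ nuVal π (2 : O_K) + nuVal π (H'.coeff j) + (j : ℕ∞) := by
          rw [add_assoc]
          exact add_le_add_left (nuVal_two hπ h2) _
  have hlt : nuVal π (Q.coeff j) < nuVal π (-(2 * H'.coeff j)) := by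
    rw [← hj] at hbig
    exact (WithTop.add_lt_add_iff_right (ENat.coe_ne_top j)).1 hbig
  calc mu0 π (Q - 2 * H') ≤ nuVal π ((Q - 2 * H').coeff j) + (j : ℕ∞) := mu0_le_coeff _ j
    _ = nuVal π (Q.coeff j) + (j : ℕ∞) := by rw [hco, nuVal_add_of_gt hπ hlt]
    _ = mu0 π Q := hj

/-- Sublemma B1 : if `h < a` and `2h < b` then `μ₀(S') ≤ 2h`. -/
theorem subB1 (Q P H' : Polynomial O_K)
    (hha : mu0 π H' < mu0 π Q) (hb : 2 * mu0 π H' < mu0 π P) :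
    mu0 π (P + Q * H' - H' ^ 2) ≤ 2 * mu0 π H' := by
  classical
  set h := mu0 π H' with hdefh
  have hht : h ≠ ⊤ := hha.ne_top
  have hhh : h + h ≠ ⊤ := WithTop.add_ne_top.2 ⟨hht, hht⟩
  have hex : ∃ i, nuVal π (H'.coeff i) + (i : ℕ∞) = h := mu0_attained hht
  set i0 := Nat.find hex with hi0def
  have hi0 : nuVal π (H'.coeff i0) + (i0 : ℕ∞) = h := Nat.find_spec hex
  have hstrict : ∀ i < i0, h + 1 ≤ nuVal π (H'.coeff i) + (i : ℕ∞) := by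
    intro i hi
    exact ENat.add_one_le_iff hht |>.2
      (lt_of_le_of_ne (mu0_le_coeff H' i) (Ne.symm (Nat.find_min hex hi)))
  -- the square coefficient
  have hcoeff : (H' ^ 2).coeff (2 * i0) =
      (∑ p ∈ (Finset.HasAntidiagonal.antidiagonal (2 * i0)).erase (i0, i0),
        H'.coeff p.1 * H'.coeff p.2) + H'.coeff i0 * H'.coeff i0 := by
    rw [sq, coeff_mul]
    rw [Finset.sum_erase_add _ _ (by simp [Finset.mem_antidiagonal, two_mul])]
  have hrest : h + h + 1 ≤ nuVal π (∑ p ∈ (Finset.HasAntidiagonal.antidiagonal (2 * i0)).erase (i0, i0),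
      H'.coeff p.1 * H'.coeff p.2) + ((2 * i0 : ℕ) : ℕ∞) := by
    apply nuVal_sum_add hπ
    rintro ⟨i, l⟩ hmem
    rw [Finset.mem_erase, Finset.HasAntidiagonal.mem_antidiagonal] at hmem
    obtain ⟨hne, hil⟩ := hmem
    have hilnat : i + l = 2 * i0 := hil
    have hne' : ¬(i = i0 ∧ l = i0) := by simpa [Prod.ext_iff] using hne
    have hcast : ((2 * i0 : ℕ) : ℕ∞) = (i : ℕ∞) + (l : ℕ∞) := by exact_mod_cast hilnat.symm
    rw [nuVal_mul hπ, hcast, ← add_assoc]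
    have hkey : h + h + 1 ≤ (nuVal π (H'.coeff i) + (i : ℕ∞)) +
        (nuVal π (H'.coeff l) + (l : ℕ∞)) := by
      rcases (by omega : i < i0 ∨ l < i0) with hlt | hlt
      · calc h + h + 1 = (h + 1) + h := by ring
          _ ≤ _ := add_le_add (hstrict i hlt) (mu0_le_coeff H' l)
      · calc h + h + 1 = h + (h + 1) := by ring
          _ ≤ _ := add_le_add (mu0_le_coeff H' i) (hstrict l hlt)
    calc h + h + 1 ≤ (nuVal π (H'.coeff i) + (i : ℕ∞)) +
          (nuVal π (H'.coeff l) + (l : ℕ∞)) := hkey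
      _ = nuVal π (H'.coeff i) + nuVal π (H'.coeff l) + (i : ℕ∞) + (l : ℕ∞) := by ring
  have hsqval : nuVal π ((H' ^ 2).coeff (2 * i0)) + ((2 * i0 : ℕ) : ℕ∞) = h + h := by
    have hdiag : nuVal π (H'.coeff i0 * H'.coeff i0) + ((2 * i0 : ℕ) : ℕ∞) = h + h := by
      rw [nuVal_mul hπ]
      have : ((2 * i0 : ℕ) : ℕ∞) = (i0 : ℕ∞) + (i0 : ℕ∞) := by push_cast; ring
      rw [this, ← hi0]; ring
    have hlt : nuVal π (H'.coeff i0 * H'.coeff i0) <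
        nuVal π (∑ p ∈ (Finset.HasAntidiagonal.antidiagonal (2 * i0)).erase (i0, i0),
          H'.coeff p.1 * H'.coeff p.2) := by
      have h1 : nuVal π (H'.coeff i0 * H'.coeff i0) + ((2 * i0 : ℕ) : ℕ∞) <
          nuVal π (∑ p ∈ (Finset.HasAntidiagonal.antidiagonal (2 * i0)).erase (i0, i0),
            H'.coeff p.1 * H'.coeff p.2) + ((2 * i0 : ℕ) : ℕ∞) := by
        rw [hdiag]
        exact lt_of_lt_of_le (by rw [ENat.lt_add_one_iff hhh]) hrest
      exact (WithTop.add_lt_add_iff_right (ENat.coe_ne_top _)).1 h1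
    rw [hcoeff, nuVal_add_of_gt hπ hlt, hdiag]
  -- remaining terms
  have hP : h + h + 1 ≤ nuVal π (P.coeff (2 * i0)) + ((2 * i0 : ℕ) : ℕ∞) := by
    calc h + h + 1 = 2 * h + 1 := by rw [two_mul]
      _ ≤ mu0 π P := ENat.add_one_le_iff (by simpa [two_mul] using hhh) |>.2 hb
      _ ≤ _ := mu0_le_coeff P _
  have hQH : h + h + 1 ≤ nuVal π ((Q * H').coeff (2 * i0)) + ((2 * i0 : ℕ) : ℕ∞) := by
    calc h + h + 1 = (h + 1) + h := by ring
      _ ≤ mu0 π Q + mu0 π H' := add_le_add (ENat.add_one_le_iff hht |>.2 hha) le_rfl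
      _ ≤ _ := mu0_mul_coeff hπ Q H' _
  have hPQ : h + h + 1 ≤ nuVal π (P.coeff (2 * i0) + (Q * H').coeff (2 * i0)) +
      ((2 * i0 : ℕ) : ℕ∞) := nuVal_add_add hπ hP hQH
  -- final coefficient
  have hScoeff : (P + Q * H' - H' ^ 2).coeff (2 * i0) =
      -((H' ^ 2).coeff (2 * i0)) + (P.coeff (2 * i0) + (Q * H').coeff (2 * i0)) := by
    simp [coeff_sub, coeff_add]; ring
  have hlt2 : nuVal π (-((H' ^ 2).coeff (2 * i0))) <
      nuVal π (P.coeff (2 * i0) + (Q * H').coeff (2 * i0)) := by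
    apply (ENat.add_lt_add_iff_right (ENat.coe_ne_top (2 * i0))).1
    rw [nuVal_neg hπ, hsqval]
    exact lt_of_lt_of_le (by rw [ENat.lt_add_one_iff hhh]) hPQ
  calc mu0 π (P + Q * H' - H' ^ 2)
      ≤ nuVal π ((P + Q * H' - H' ^ 2).coeff (2 * i0)) + ((2 * i0 : ℕ) : ℕ∞) :=
        mu0_le_coeff _ _
    _ = nuVal π (-((H' ^ 2).coeff (2 * i0))) + ((2 * i0 : ℕ) : ℕ∞) := by
        rw [hScoeff, add_comm (-((H' ^ 2).coeff (2 * i0)))]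
        rw [nuVal_add_of_gt hπ hlt2]
    _ = h + h := by rw [nuVal_neg hπ]; exact hsqval
    _ = 2 * h := (two_mul h).symm

end sub

section subo
set_option linter.unusedSectionVars false
variable {O_K : Type*} [CommRing O_K] [IsDomain O_K] [IsDiscreteValuationRing O_K]
  {π : O_K} (hπ : Irreducible π)
include hπ

/-- Sublemma O : odd-index coefficient argument. -/
theorem subO (h2 : π ∣ (2 : O_K)) (Q P H' : Polynomial O_K) (m : ℕ)
    (hattain : nuVal π (P.coeff (2 * m + 1)) + ((2 * m + 1 : ℕ) : ℕ∞) = mu0 π P)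
    (hbt : mu0 π P ≠ ⊤)
    (hah : mu0 π P < mu0 π Q + mu0 π H')
    (h2h : mu0 π P < 1 + (mu0 π H' + mu0 π H')) :
    mu0 π (P + Q * H' - H' ^ 2) ≤ mu0 π P := by
  set b := mu0 π P with hbdef
  set j0 := 2 * m + 1 with hj0def
  -- bound for the QH' coefficient
  have hQH : b + 1 ≤ nuVal π ((Q * H').coeff j0) + ((j0 : ℕ) : ℕ∞) :=
    le_trans (ENat.add_one_le_iff hbt |>.2 hah) (mu0_mul_coeff hπ Q H' j0)
  -- bound for the H'^2 coefficient
  have hsq : b + 1 ≤ nuVal π ((H' ^ 2).coeff j0) + ((j0 : ℕ) : ℕ∞) := by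
    have hco := coeff_sq_odd H' m
    rw [← sq] at hco
    have hsum : mu0 π H' + mu0 π H' ≤
        nuVal π (∑ k ∈ Finset.range (m + 1), H'.coeff k * H'.coeff (2 * m + 1 - k)) +
          ((j0 : ℕ) : ℕ∞) := by
      apply nuVal_sum_add hπ
      intro k hk
      rw [Finset.mem_range] at hk
      have hkj : ((j0 : ℕ) : ℕ∞) = (k : ℕ∞) + ((2 * m + 1 - k : ℕ) : ℕ∞) := by
        have : k + (2 * m + 1 - k) = j0 := by omega
        exact_mod_cast this.symm
      rw [nuVal_mul hπ, hkj, ← add_assoc]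
      calc mu0 π H' + mu0 π H'
          ≤ (nuVal π (H'.coeff k) + (k : ℕ∞)) +
            (nuVal π (H'.coeff (2 * m + 1 - k)) + ((2 * m + 1 - k : ℕ) : ℕ∞)) :=
            add_le_add (mu0_le_coeff H' k) (mu0_le_coeff H' _)
        _ = nuVal π (H'.coeff k) + nuVal π (H'.coeff (2 * m + 1 - k)) + (k : ℕ∞) +
            ((2 * m + 1 - k : ℕ) : ℕ∞) := by ring
    calc b + 1 ≤ 1 + (mu0 π H' + mu0 π H') := ENat.add_one_le_iff hbt |>.2 h2h
      _ ≤ 1 + (nuVal π (∑ k ∈ Finset.range (m + 1),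
            H'.coeff k * H'.coeff (2 * m + 1 - k)) + ((j0 : ℕ) : ℕ∞)) :=
          add_le_add_right hsum 1
      _ = (1 + nuVal π (∑ k ∈ Finset.range (m + 1),
            H'.coeff k * H'.coeff (2 * m + 1 - k))) + ((j0 : ℕ) : ℕ∞) := by ring
      _ ≤ nuVal π ((H' ^ 2).coeff j0) + ((j0 : ℕ) : ℕ∞) := by
          apply add_le_add_left
          rw [hco, nuVal_mul hπ]
          exact add_le_add (nuVal_two hπ h2) le_rfl
  -- combine
  have hrest : b + 1 ≤ nuVal π ((Q * H').coeff j0 + -((H' ^ 2).coeff j0)) +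
      ((j0 : ℕ) : ℕ∞) := by
    apply nuVal_add_add hπ hQH
    rw [nuVal_neg hπ]; exact hsq
  have hScoeff : (P + Q * H' - H' ^ 2).coeff j0 =
      ((Q * H').coeff j0 + -((H' ^ 2).coeff j0)) + P.coeff j0 := by
    simp [coeff_sub, coeff_add]; ring
  have hlt : nuVal π (P.coeff j0) <
      nuVal π ((Q * H').coeff j0 + -((H' ^ 2).coeff j0)) := by
    apply (ENat.add_lt_add_iff_right (ENat.coe_ne_top j0)).1
    rw [hattain]
    exact lt_of_lt_of_le (by rw [ENat.lt_add_one_iff hbt]) hrest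
  calc mu0 π (P + Q * H' - H' ^ 2)
      ≤ nuVal π ((P + Q * H' - H' ^ 2).coeff j0) + ((j0 : ℕ) : ℕ∞) := mu0_le_coeff _ j0
    _ = nuVal π (P.coeff j0) + ((j0 : ℕ) : ℕ∞) := by
        rw [hScoeff, nuVal_add_of_gt hπ hlt]
    _ = b := hattain

end subo

/-- if `2μ₀(Q) ≤ μ₀(P)`, or there is an odd index `j` with
`ν(a_j) + j = μ₀(P)`, then `λ₀(Q, P)` is maximal among all equations obtained by
substitutions `y = z + H'(x)`. -/
theorem statement10 (O_K : Type*) [CommRing O_K] [IsDomain O_K] [IsDiscreteValuationRing O_K]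
    (π : O_K) (hπ : Irreducible π)
    [CharP (IsLocalRing.ResidueField O_K) 2] [PerfectField (IsLocalRing.ResidueField O_K)]
    (Q P : Polynomial O_K)
    (hcond : 2 * mu0 π Q ≤ mu0 π P ∨
      ∃ j : ℕ, Odd j ∧ nuVal π (P.coeff j) + (j : ℕ∞) = mu0 π P) :
    ∀ H' : Polynomial O_K,
      lam0 π (Q - 2 * H') (P + Q * H' - H' ^ 2) ≤ lam0 π Q P := by
  intro H'
  have h2 : π ∣ (2 : O_K) := by
    have hres : (IsLocalRing.residue O_K) 2 = 0 := by
      have h := CharP.cast_eq_zero (IsLocalRing.ResidueField O_K) 2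
      rw [map_ofNat]
      exact_mod_cast h
    have hmem : (2 : O_K) ∈ IsLocalRing.maximalIdeal O_K :=
      (IsLocalRing.residue_eq_zero_iff _).1 hres
    rw [hπ.maximalIdeal_eq, Ideal.mem_span_singleton] at hmem
    exact hmem
  by_cases htriv : lam0 π Q P = ⊤
  · rw [htriv]; exact le_top
  simp only [lam0] at htriv ⊢
  set a := mu0 π Q with hadef
  set b := mu0 π P with hbdef
  set h := mu0 π H' with hhdef
  by_cases hab : 2 * a ≤ b
  · have hmin : min (2 * a) b = 2 * a := min_eq_left hab
    have ha : a ≠ ⊤ := by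
      intro hat
      exact htriv (by rw [hmin, hat]; simp)
    by_cases hha : a ≤ h
    · have hR := subR hπ h2 Q H' ha hha
      calc min (2 * mu0 π (Q - 2 * H')) (mu0 π (P + Q * H' - H' ^ 2))
          ≤ 2 * mu0 π (Q - 2 * H') := min_le_left _ _
        _ ≤ 2 * a := mul_le_mul_right hR 2
        _ = min (2 * a) b := hmin.symm
    · push_neg at hha
      have h2h : 2 * h < b := lt_of_lt_of_le (enat_two_mul_lt hha) hab
      have hS := subB1 hπ Q P H' hha h2h
      calc min (2 * mu0 π (Q - 2 * H')) (mu0 π (P + Q * H' - H' ^ 2))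
          ≤ mu0 π (P + Q * H' - H' ^ 2) := min_le_right _ _
        _ ≤ 2 * h := hS
        _ ≤ min (2 * a) b := le_min (le_of_lt (enat_two_mul_lt hha)) (le_of_lt h2h)
  · push_neg at hab
    obtain ⟨j0, hodd, hatt⟩ := hcond.resolve_left (not_le.2 hab)
    obtain ⟨m, hm⟩ := hodd
    have hm' : j0 = 2 * m + 1 := by omega
    subst hm'
    have hmin : min (2 * a) b = b := min_eq_right (le_of_lt hab)
    have hb : b ≠ ⊤ := fun hbt => htriv (by rw [hmin, hbt])
    by_cases hbh : b ≤ 2 * h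
    · have hah : b < a + h := by
        by_contra hc
        push_neg at hc
        have hht : h ≠ ⊤ := by
          intro ht
          have : (⊤ : ℕ∞) ≤ b := by simpa [ht] using hc
          exact hb (top_le_iff.1 this)
        have hah2 : a ≤ h := by
          have h1 : a + h ≤ h + h := le_trans hc (by rw [two_mul] at hbh; exact hbh)
          exact (WithTop.add_le_add_iff_right hht).1 h1
        have h2a : 2 * a ≤ b := by
          rw [two_mul]
          exact le_trans (add_le_add le_rfl hah2) hc
        exact absurd h2a (not_le.2 hab)
      have h1h : b < 1 + (h + h) := by
        rw [← ENat.add_one_le_iff hb]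
        calc b + 1 ≤ 2 * h + 1 := add_le_add_left hbh 1
          _ = 1 + (h + h) := by rw [two_mul]; ring
      have hS := subO hπ h2 Q P H' m hatt hb hah h1h
      calc min (2 * mu0 π (Q - 2 * H')) (mu0 π (P + Q * H' - H' ^ 2))
          ≤ mu0 π (P + Q * H' - H' ^ 2) := min_le_right _ _
        _ ≤ b := hS
        _ = min (2 * a) b := hmin.symm
    · push_neg at hbh
      have hha : h < a := by
        by_contra hc
        push_neg at hc
        exact absurd (lt_trans hab (lt_of_le_of_lt (mul_le_mul_right hc 2) hbh))
          (lt_irrefl b)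
      have hS := subB1 hπ Q P H' hha hbh
      calc min (2 * mu0 π (Q - 2 * H')) (mu0 π (P + Q * H' - H' ^ 2))
          ≤ mu0 π (P + Q * H' - H' ^ 2) := min_le_right _ _
        _ ≤ 2 * h := hS
        _ ≤ b := le_of_lt hbh
        _ = min (2 * a) b := hmin.symm
end
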